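/- Let G be a digraph, let s ≠ t be vertices of G, and let k_2,k_3 be nonnegative integers. Set X = N⁺(s)∖{s,t} and Y = N⁻(t)∖{s,t}. Then G contains k_2+k_3 pairwise internally vertex-disjoint (s,t)-paths, each of length at least 2, of which at least k_3 have length at least 3, if and only if there exist an integer r with 0 ≤ r ≤ min{k_2, |X∩Y|}, a set R ⊆ X∩Y with |R| = r, and k_2+k_3−r pairwise vertex-disjoint nontrivial directed paths in the digraph G−{s,t} (obtained by deleting s and t), each starting at a vertex of X and ending at a vertex of Y, none of which contains a vertex of R. -/

import Mathlib

/-!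
An `(s,t)`-path with at least three vertices is `s :: q ++ [t]`, where `q` is a path of
`G - {s,t}` from `X` to `Y`, and internal disjointness of such `(s,t)`-paths is exactly
disjointness of their inner parts `q`. An `(s,t)`-path of length two has inner part a single
vertex of `X ∩ Y`; these vertices form `R`, and since at least `k₃` of the paths are longer,
`|R| ≤ k₂`. The remaining inner parts are the nontrivial `X`–`Y` paths, which avoid `R`.
Conversely, the single vertices of `R` and the given paths reassemble into `(s,t)`-paths.
-/

/-- `p` is a directed path: a nonempty list of pairwise distinct vertices in which
consecutive vertices are joined by arcs of the digraph with arc relation `A`. -/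
def IsPath {V : Type*} (A : V → V → Prop) (p : List V) : Prop :=
  p ≠ [] ∧ p.Nodup ∧ p.Chain' A

/-- `p` is a directed `(u,v)`-path. -/
def IsPathFT {V : Type*} (A : V → V → Prop) (u v : V) (p : List V) : Prop :=
  IsPath A p ∧ p.head? = some u ∧ p.getLast? = some v

open Finset Function

section Paths

variable {V : Type*} {A : V → V → Prop} {s t x y : V} {p q : List V}

theorem isPath_iff : IsPath A p ↔ p ≠ [] ∧ p.Nodup ∧ p.IsChain A := Iff.rfl

theorem IsPath.infix (h : IsPath A p) (hq : q <:+: p) (hne : q ≠ []) : IsPath A q :=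
  ⟨hne, h.2.1.sublist hq.sublist, List.IsChain.infix h.2.2 hq⟩

theorem IsPath.isPathFT (h : IsPath A p) : IsPathFT A (p.head h.1) (p.getLast h.1) p :=
  ⟨h, List.head?_eq_some_head h.1, List.getLast?_eq_some_getLast h.1⟩

theorem isPathFT_singleton (v : V) : IsPathFT A v v [v] :=
  ⟨isPath_iff.2 ⟨List.cons_ne_nil _ _, List.nodup_singleton v, .singleton v⟩, rfl, rfl⟩

theorem IsPathFT.left_mem (h : IsPathFT A x y p) : x ∈ p :=
  List.mem_of_mem_head? h.2.1

theorem IsPathFT.right_mem (h : IsPathFT A x y p) : y ∈ p :=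
  List.mem_of_mem_getLast? h.2.2

theorem IsPathFT.eq_singleton (h : IsPathFT A x y p) (hp : p.length < 2) : p = [x] ∧ y = x := by
  obtain ⟨⟨hne, -, -⟩, hx, hy⟩ := h
  have hp1 : p.length = 1 := by have := List.length_pos_iff.mpr hne; omega
  obtain ⟨v, rfl⟩ := List.length_eq_one_iff.mp hp1
  simp_all

theorem IsPathFT.ne_of_two_le_length (h : IsPathFT A x y p) (hp : 2 ≤ p.length) : x ≠ y := by
  obtain ⟨⟨-, hnd, -⟩, hx, hy⟩ := h
  rintro rfl
  rw [List.head?_eq_getElem?, List.getElem?_eq_some_iff] at hx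
  rw [List.getLast?_eq_getElem?, List.getElem?_eq_some_iff] at hy
  obtain ⟨h0, hx⟩ := hx
  obtain ⟨h1, hy⟩ := hy
  have := hnd.getElem_inj_iff.mp (hx.trans hy.symm)
  omega

theorem IsPathFT.two_le_length (h : IsPathFT A x y p) (hxy : x ≠ y) : 2 ≤ p.length := by
  by_contra! hp
  exact hxy (h.eq_singleton hp).2.symm

theorem isPathFT_cons_append_iff (hq : IsPathFT A x y q) :
    IsPathFT A s t (s :: q ++ [t]) ↔ s ≠ t ∧ s ∉ q ∧ t ∉ q ∧ A s x ∧ A y t := by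
  obtain ⟨hpath, hx, hy⟩ := hq
  obtain ⟨-, hnd, hch⟩ := isPath_iff.mp hpath
  simp [IsPathFT, isPath_iff, List.nodup_append, List.isChain_append, List.isChain_cons,
    hnd, hch, hx, hy]
  grind

theorem IsPathFT.exists_eq_cons_append (h : IsPathFT A s t p) (hp : 3 ≤ p.length) :
    ∃ q x y, p = s :: q ++ [t] ∧ IsPathFT A x y q := by
  obtain ⟨hpath, hs, ht⟩ := h
  obtain ⟨l, rfl⟩ := List.head?_eq_some_iff.mp hs
  have hl : l ≠ [] := by rintro rfl; simp at hp
  obtain ⟨q, rfl⟩ : ∃ q, l = q ++ [t] := by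
    rw [← List.getLast?_eq_some_iff, List.getLast?_eq_some_getLast hl]
    simpa [List.getLast?_cons, List.getLast?_eq_some_getLast hl] using ht
  have hq : q ≠ [] := by rintro rfl; simp at hp
  exact ⟨q, _, _, rfl, (hpath.infix ⟨[s], [t], rfl⟩ hq).isPathFT⟩

end Paths

/-- A linkage from `X` to `Y` in the digraph minus `S`; one-vertex paths `[v]` with
`v ∈ X ∩ Y` are allowed. -/
structure IsLinkage {V ι : Type*} (A : V → V → Prop) (S X Y : Set V) (q : ι → List V) :
    Prop where
  isPathFT : ∀ i, ∃ x ∈ X, ∃ y ∈ Y, IsPathFT A x y (q i)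
  not_mem : ∀ i, ∀ v ∈ q i, v ∉ S
  pairwise_disjoint : Pairwise (List.Disjoint on q)

namespace IsLinkage

variable {V ι κ : Type*} {A : V → V → Prop} {S X Y : Set V}

theorem comp {q : ι → List V} (h : IsLinkage A S X Y q) {f : κ → ι} (hf : f.Injective) :
    IsLinkage A S X Y (q ∘ f) :=
  ⟨fun i => h.isPathFT (f i), fun i => h.not_mem (f i), h.pairwise_disjoint.comp_of_injective hf⟩

theorem sumElim {f : ι → List V} {g : κ → List V} (hf : IsLinkage A S X Y f)
    (hg : IsLinkage A S X Y g) (hfg : ∀ i j, (f i).Disjoint (g j)) :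
    IsLinkage A S X Y (Sum.elim f g) where
  isPathFT := Sum.rec hf.isPathFT hg.isPathFT
  not_mem := Sum.rec hf.not_mem hg.not_mem
  pairwise_disjoint := by
    rintro (i | i) (j | j) hij
    · exact hf.pairwise_disjoint (ne_of_apply_ne _ hij)
    · exact hfg i j
    · exact (hfg j i).symm
    · exact hg.pairwise_disjoint (ne_of_apply_ne _ hij)

theorem singleton (R : Finset V) (hRXY : ∀ v ∈ R, v ∈ X ∩ Y) (hRS : ∀ v ∈ R, v ∉ S) :
    IsLinkage A S X Y (fun v : R => [v.1]) where
  isPathFT v := ⟨v, (hRXY v v.2).1, v, (hRXY v v.2).2, isPathFT_singleton _⟩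
  not_mem v := by simpa using hRS v v.2
  pairwise_disjoint v w hvw := by simpa [eq_comm] using Subtype.coe_ne_coe.mpr hvw

end IsLinkage

section Linkages

variable {V ι : Type*} {A : V → V → Prop} {s t : V} {X Y : Set V}

theorem exists_stPaths_iff_exists_isLinkage [Fintype ι] (hst : s ≠ t)
    (hX : X = {x | A s x ∧ x ≠ s ∧ x ≠ t}) (hY : Y = {y | A y t ∧ y ≠ s ∧ y ≠ t}) (k : ℕ) :
    (∃ P : ι → List V,
      (∀ i, IsPathFT A s t (P i) ∧ 3 ≤ (P i).length) ∧
      (∀ i j, i ≠ j → ∀ x, x ∈ P i → x ∈ P j → x = s ∨ x = t) ∧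
      k ≤ #{i | 4 ≤ (P i).length}) ↔
    ∃ q : ι → List V, IsLinkage A {s, t} X Y q ∧ k ≤ #{i | 2 ≤ (q i).length} := by
  subst hX hY
  constructor
  · rintro ⟨P, hP, hdisj, hk⟩
    choose q x y hPq hq using fun i => (hP i).1.exists_eq_cons_append (hP i).2
    obtain rfl : P = fun i => s :: q i ++ [t] := funext hPq
    have hend i := (isPathFT_cons_append_iff (hq i)).1 (hP i).1
    have hinner i : ∀ v ∈ q i, v ≠ s ∧ v ≠ t := fun v hv =>
      ⟨fun h => (hend i).2.1 (h ▸ hv), fun h => (hend i).2.2.1 (h ▸ hv)⟩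
    refine ⟨q, ⟨fun i => ⟨x i, ⟨(hend i).2.2.2.1, hinner i _ (hq i).left_mem⟩,
      y i, ⟨(hend i).2.2.2.2, hinner i _ (hq i).right_mem⟩, hq i⟩,
      fun i v hv => by simpa using hinner i v hv, ?_⟩, by simpa using hk⟩
    intro i j hij v hvi hvj
    obtain rfl | rfl := hdisj i j hij v (by simp [hvi]) (by simp [hvj])
    exacts [(hinner i _ hvi).1 rfl, (hinner i _ hvi).2 rfl]
  · rintro ⟨q, hq, hk⟩
    choose x hx y hy hqxy using hq.isPathFT
    refine ⟨fun i => s :: q i ++ [t], fun i => ⟨?_, ?_⟩, ?_, by simpa using hk⟩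
    · exact (isPathFT_cons_append_iff (hqxy i)).2 ⟨hst, fun h => hq.not_mem i s h (by simp),
        fun h => hq.not_mem i t h (by simp), (hx i).1, (hy i).1⟩
    · simpa [Nat.one_le_iff_ne_zero] using (hqxy i).1.1
    · intro i j hij v hvi hvj
      by_contra! hv
      simp only [List.cons_append, List.mem_cons, List.mem_append, hv.1, hv.2, false_or,
        or_false, List.not_mem_nil] at hvi hvj
      exact hq.pairwise_disjoint hij hvi hvj

theorem IsLinkage.exists_finset_and_nontrivial_paths [DecidableEq V] [Finite V] {k2 k3 : ℕ}
    {q : Fin (k2 + k3) → List V} (hq : IsLinkage A {s, t} X Y q)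
    (hk : k3 ≤ #{i | 2 ≤ (q i).length}) :
    ∃ (r : ℕ) (R : Finset V), r ≤ k2 ∧ r ≤ (X ∩ Y).ncard ∧
      (∀ v ∈ R, v ∈ X ∩ Y) ∧ R.card = r ∧
      ∃ Q : Fin (k2 + k3 - r) → List V,
        (∀ i, ∃ x y, x ∈ X ∧ y ∈ Y ∧ x ≠ y ∧ IsPathFT A x y (Q i) ∧
          ∀ v ∈ Q i, v ≠ s ∧ v ≠ t ∧ v ∉ R) ∧
        (∀ i j, i ≠ j → ∀ v, v ∈ Q i → v ∉ Q j) := by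
  set L : Finset (Fin (k2 + k3)) := {i | 2 ≤ (q i).length}
  have hshort : ∀ i ∉ L, ∃ v ∈ X ∩ Y, q i = [v] := by
    intro i hi
    obtain ⟨x, hx, y, hy, hxy⟩ := hq.isPathFT i
    obtain ⟨hqi, rfl⟩ := hxy.eq_singleton (by simpa [L] using hi)
    exact ⟨y, ⟨hx, hy⟩, hqi⟩
  have : Nonempty V := ⟨s⟩
  choose! m hmXY hm using hshort
  set R := Lᶜ.image m
  have hRXY : ∀ v ∈ R, v ∈ X ∩ Y := by
    simp only [R, mem_image]
    rintro _ ⟨i, hi, rfl⟩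
    exact hmXY i (mem_compl.mp hi)
  have hRcard : #R = #Lᶜ := by
    refine card_image_of_injOn fun i hi j hj hij => ?_
    by_contra hne
    exact hq.pairwise_disjoint hne (a := m i) (by simp [hm i (mem_compl.mp hi)])
      (by simp [hm j (mem_compl.mp hj), hij])
  have hsum : #Lᶜ + #L = k2 + k3 := by rw [card_compl_add_card, Fintype.card_fin]
  have hLcard : #L = k2 + k3 - #R := by omega
  refine ⟨#R, R, by omega, ?_, hRXY, rfl, q ∘ L.orderEmbOfFin hLcard, fun i => ?_,
    fun i j hij => (hq.comp (L.orderEmbOfFin hLcard).injective).pairwise_disjoint hij⟩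
  · calc #R = (R : Set V).ncard := (Set.ncard_coe_finset R).symm
      _ ≤ (X ∩ Y).ncard := Set.ncard_le_ncard hRXY
  · set j := L.orderEmbOfFin hLcard i
    have hj : j ∈ L := L.orderEmbOfFin_mem hLcard i
    obtain ⟨x, hx, y, hy, hxy⟩ := hq.isPathFT j
    refine ⟨x, y, hx, hy, hxy.ne_of_two_le_length (by simpa [L] using hj), hxy, fun v hv => ?_⟩
    have hvst : v ∉ ({s, t} : Set V) := hq.not_mem j v hv
    refine ⟨fun h => hvst (by simp [h]), fun h => hvst (by simp [h]), ?_⟩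
    simp only [R, mem_image, mem_compl]
    rintro ⟨i', hi', rfl⟩
    exact hq.pairwise_disjoint (ne_of_mem_of_not_mem hj hi').symm (by simp [hm i' hi']) hv

theorem exists_isLinkage_of_finset_and_nontrivial_paths (hXY : ∀ v ∈ X ∩ Y, v ≠ s ∧ v ≠ t)
    {k2 k3 : ℕ} (R : Finset V) (hRk : #R ≤ k2) (hRXY : ∀ v ∈ R, v ∈ X ∩ Y)
    (Q : Fin (k2 + k3 - #R) → List V)
    (hQ : ∀ i, ∃ x y, x ∈ X ∧ y ∈ Y ∧ x ≠ y ∧ IsPathFT A x y (Q i) ∧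
      ∀ v ∈ Q i, v ≠ s ∧ v ≠ t ∧ v ∉ R)
    (hQdisj : ∀ i j, i ≠ j → ∀ v, v ∈ Q i → v ∉ Q j) :
    ∃ q : Fin (k2 + k3) → List V, IsLinkage A {s, t} X Y q ∧ k3 ≤ #{i | 2 ≤ (q i).length} := by
  choose x y hx hy hxy hQxy hQavoid using hQ
  have hQ : IsLinkage A {s, t} X Y Q :=
    ⟨fun i => ⟨x i, hx i, y i, hy i, hQxy i⟩,
      fun i v hv => by simp [(hQavoid i v hv).1, (hQavoid i v hv).2.1],
      fun i j hij v => hQdisj i j hij v⟩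
  have hR : IsLinkage A {s, t} X Y (fun v : R => [v.1]) :=
    IsLinkage.singleton R hRXY fun v hv => by
      simp [(hXY v (hRXY v hv)).1, (hXY v (hRXY v hv)).2]
  have hRQ : ∀ (v : R) i, List.Disjoint [v.1] (Q i) := fun v i => by
    simpa using fun h => (hQavoid i v h).2.2 v.2
  let e : Fin (k2 + k3) ≃ R ⊕ Fin (k2 + k3 - #R) := Fintype.equivOfCardEq (by simp; omega)
  refine ⟨Sum.elim _ Q ∘ e, (hR.sumElim hQ hRQ).comp e.injective, ?_⟩
  calc k3 ≤ k2 + k3 - #R := by omega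
    _ = #(univ : Finset (Fin (k2 + k3 - #R))) := by simp
    _ ≤ _ := card_le_card_of_injOn (fun i => e.symm (.inr i))
        (fun i _ => by simpa using (hQxy i).two_le_length (hxy i))
        (e.symm.injective.comp Sum.inr_injective).injOn

end Linkages

theorem stmt8_general {V : Type*} [Fintype V] [DecidableEq V]
    (A : V → V → Prop)
    (s t : V) (hst : s ≠ t) (k2 k3 : ℕ)
    (X Y : Set V)
    (hXdef : X = {x | A s x ∧ x ≠ s ∧ x ≠ t})
    (hYdef : Y = {y | A y t ∧ y ≠ s ∧ y ≠ t}) :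
    (∃ P : Fin (k2 + k3) → List V,
      (∀ i, IsPathFT A s t (P i) ∧ 3 ≤ (P i).length) ∧
      (∀ i j, i ≠ j → ∀ x, x ∈ P i → x ∈ P j → x = s ∨ x = t) ∧
      k3 ≤ (Finset.univ.filter fun i => 4 ≤ (P i).length).card) ↔
    (∃ (r : ℕ) (R : Finset V), r ≤ k2 ∧ r ≤ (X ∩ Y).ncard ∧
      (∀ v ∈ R, v ∈ X ∩ Y) ∧ R.card = r ∧
      ∃ Q : Fin (k2 + k3 - r) → List V,
        (∀ i, ∃ x y, x ∈ X ∧ y ∈ Y ∧ x ≠ y ∧ IsPathFT A x y (Q i) ∧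
          ∀ v ∈ Q i, v ≠ s ∧ v ≠ t ∧ v ∉ R) ∧
        (∀ i j, i ≠ j → ∀ v, v ∈ Q i → v ∉ Q j)) := by
  rw [exists_stPaths_iff_exists_isLinkage hst hXdef hYdef]
  constructor
  · rintro ⟨q, hq, hk⟩
    exact hq.exists_finset_and_nontrivial_paths hk
  · rintro ⟨r, R, hRk, -, hRXY, rfl, Q, hQ, hQdisj⟩
    have hXY : ∀ v ∈ X ∩ Y, v ≠ s ∧ v ≠ t := fun v hv => (hXdef ▸ hv.1 : _).2
    exact exists_isLinkage_of_finset_and_nontrivial_paths hXY R hRk hRXY Q hQ hQdisj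

theorem stmt8 {V : Type*} [Fintype V] [DecidableEq V]
    (A : V → V → Prop) (harc : ∀ a b, A a b → a ≠ b)
    (s t : V) (hst : s ≠ t) (k2 k3 : ℕ)
    (X Y : Set V)
    (hXdef : X = {x | A s x ∧ x ≠ s ∧ x ≠ t})
    (hYdef : Y = {y | A y t ∧ y ≠ s ∧ y ≠ t}) :
    (∃ P : Fin (k2 + k3) → List V,
      (∀ i, IsPathFT A s t (P i) ∧ 3 ≤ (P i).length) ∧
      (∀ i j, i ≠ j → ∀ x, x ∈ P i → x ∈ P j → x = s ∨ x = t) ∧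
      k3 ≤ (Finset.univ.filter fun i => 4 ≤ (P i).length).card) ↔
    (∃ (r : ℕ) (R : Finset V), r ≤ k2 ∧ r ≤ (X ∩ Y).ncard ∧
      (∀ v ∈ R, v ∈ X ∩ Y) ∧ R.card = r ∧
      ∃ Q : Fin (k2 + k3 - r) → List V,
        (∀ i, ∃ x y, x ∈ X ∧ y ∈ Y ∧ x ≠ y ∧ IsPathFT A x y (Q i) ∧
          ∀ v ∈ Q i, v ≠ s ∧ v ≠ t ∧ v ∉ R) ∧
        (∀ i j, i ≠ j → ∀ v, v ∈ Q i → v ∉ Q j)) :=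
  stmt8_general A s t hst k2 k3 X Y hXdef hYdef
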